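/- Let x be a GT-pattern with tiling 𝒫, free tiles P_1,...,P_s, and tiling matrix A_𝒫. For ε ∈ ker A_𝒫 with all coordinates of absolute value less than half the minimum gap between distinct entries of x, define y ∈ X_n by y_{ij} = ε_k if (i,j) ∈ P_k and y_{ij} = 0 otherwise. Then both x + y and x − y are GT-patterns lying in the same GT-polytope GT(λ,μ) as x. -/

import Mathlib

/-!
Along a tile the perturbation `y` is constant, and between adjacent positions carrying different
entries it moves each entry by less than half the gap, so every interlacing inequality of `x`
survives in `x ± y`. Nonnegativity follows by comparing each entry with the top-row entry at the
end of its diagonal, where `y` vanishes. The top row is untouched because free tiles avoid it, and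
the row sums are unchanged: row `j` of `y` sums to `Σₖ #{i : (i,j) ∈ Pₖ} εₖ = (A_𝒫 ε)ⱼ = 0`.
-/

/-- Valid index positions of a triangular array of size `n`. -/
abbrev IdxP (n i j : ℕ) : Prop := 1 ≤ i ∧ i ≤ j ∧ j ≤ n

/-- A Gelfand--Tsetlin pattern of size `n` (entries outside the triangle are ignored). -/
def IsGTPattern (n : ℕ) (x : ℕ → ℕ → ℝ) : Prop :=
  (∀ i j, IdxP n i j → 0 ≤ x i j) ∧
  (∀ i j, 1 ≤ i → i ≤ j → j + 1 ≤ n → x i (j + 1) ≥ x i j ∧ x i j ≥ x (i + 1) (j + 1))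

/-- Membership in the Gelfand--Tsetlin polytope `GT(λ,μ)`: a GT-pattern, vanishing outside the
triangle, with top row `λ` and `j`-th row sum `μ₁ + ⋯ + μⱼ`. -/
def GTMem (n : ℕ) (lam mu : ℕ → ℤ) (x : ℕ → ℕ → ℝ) : Prop :=
  IsGTPattern n x ∧
  (∀ i j, ¬ IdxP n i j → x i j = 0) ∧
  (∀ i, 1 ≤ i → i ≤ n → x i n = (lam i : ℝ)) ∧
  (∀ j, 1 ≤ j → j ≤ n → ∑ i ∈ Finset.Icc 1 j, x i j = ∑ t ∈ Finset.Icc 1 j, (mu t : ℝ))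

/-- Adjacency of positions in the triangular arrangement: offsets `(±1,±1)` and `(0,±1)`. -/
def Adj (p q : ℕ × ℕ) : Prop :=
  (q.1 = p.1 + 1 ∧ q.2 = p.2 + 1) ∨ (q.1 = p.1 ∧ q.2 = p.2 + 1) ∨
  (p.1 = q.1 + 1 ∧ p.2 = q.2 + 1) ∨ (p.1 = q.1 ∧ p.2 = q.2 + 1)

/-- One step of the tile relation: adjacent valid positions carrying equal entries. -/
def Step (n : ℕ) (x : ℕ → ℕ → ℝ) (p q : ℕ × ℕ) : Prop :=
  IdxP n p.1 p.2 ∧ IdxP n q.1 q.2 ∧ Adj p q ∧ x p.1 p.2 = x q.1 q.2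

/-- Two positions lie in the same tile of the tiling of `x`. -/
def SameTile (n : ℕ) (x : ℕ → ℕ → ℝ) (p q : ℕ × ℕ) : Prop :=
  Relation.ReflTransGen (Step n x) p q

/-- A tile of the tiling of `x`. -/
def IsTile (n : ℕ) (x : ℕ → ℕ → ℝ) (T : Set (ℕ × ℕ)) : Prop :=
  ∃ p : ℕ × ℕ, IdxP n p.1 p.2 ∧ T = {q | SameTile n x p q}

/-- A free tile: a tile meeting neither the bottom entry `(1,1)` nor the top row `(i,n)`. -/
def IsFreeTile (n : ℕ) (x : ℕ → ℕ → ℝ) (T : Set (ℕ × ℕ)) : Prop :=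
  IsTile n x T ∧ ((1, 1) : ℕ × ℕ) ∉ T ∧ ∀ i, ((i, n) : ℕ × ℕ) ∉ T

/-- The tiling matrix over `ℝ`: rows indexed by `j = 2, …, n-1` (here `j = j₀ + 2`), columns by
the free tiles `P 1, …, P s`; the `(j,k)` entry is `#{i : (i,j) ∈ P k}`. -/
noncomputable def tileMat (n s : ℕ) (P : Fin s → Set (ℕ × ℕ)) :
    Matrix (Fin (n - 2)) (Fin s) ℝ :=
  fun j k => ({i : ℕ | (i, j.1 + 2) ∈ P k}.ncard : ℝ)

open Finset

section Tiles

variable {n : ℕ} {x : ℕ → ℕ → ℝ}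

lemma Step.symm {p q : ℕ × ℕ} (h : Step n x p q) : Step n x q p := by
  obtain ⟨hp, hq, hadj, hval⟩ := h
  refine ⟨hq, hp, ?_, hval.symm⟩
  unfold Adj at hadj ⊢
  omega

instance : Std.Symm (Step n x) := ⟨fun _ _ => Step.symm⟩

lemma SameTile.symm {p q : ℕ × ℕ} (h : SameTile n x p q) : SameTile n x q p :=
  Relation.ReflTransGen.stdSymm.symm _ _ h

lemma SameTile.trans {p q r : ℕ × ℕ} (hpq : SameTile n x p q) (hqr : SameTile n x q r) :
    SameTile n x p r :=
  Relation.ReflTransGen.trans hpq hqr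

lemma SameTile.idxP {p q : ℕ × ℕ} (hp : IdxP n p.1 p.2) (h : SameTile n x p q) :
    IdxP n q.1 q.2 := by
  induction h with
  | refl => exact hp
  | tail _ hstep _ => exact hstep.2.1

lemma SameTile.apply_eq {y : ℕ → ℕ → ℝ} (hy : ∀ p q, Step n x p q → y p.1 p.2 = y q.1 q.2)
    {p q : ℕ × ℕ} (h : SameTile n x p q) : y p.1 p.2 = y q.1 q.2 := by
  induction h with
  | refl => rfl
  | tail _ hstep ih => exact ih.trans (hy _ _ hstep)

lemma IsTile.idxP_of_mem {T : Set (ℕ × ℕ)} (hT : IsTile n x T) {p : ℕ × ℕ} (hp : p ∈ T) :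
    IdxP n p.1 p.2 := by
  obtain ⟨r, hr, rfl⟩ := hT
  exact SameTile.idxP hr hp

lemma IsTile.mem_of_sameTile {T : Set (ℕ × ℕ)} (hT : IsTile n x T) {p q : ℕ × ℕ} (hp : p ∈ T)
    (hpq : SameTile n x p q) : q ∈ T := by
  obtain ⟨r, -, rfl⟩ := hT
  exact SameTile.trans hp hpq

lemma IsTile.eq_of_mem {T T' : Set (ℕ × ℕ)} (hT : IsTile n x T) (hT' : IsTile n x T')
    {p : ℕ × ℕ} (hp : p ∈ T) (hp' : p ∈ T') : T = T' := by
  obtain ⟨r, -, rfl⟩ := hT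
  obtain ⟨r', -, rfl⟩ := hT'
  have hrr' : SameTile n x r r' := hp.trans hp'.symm
  ext q
  exact ⟨hrr'.symm.trans, hrr'.trans⟩

lemma IsTile.ncard_row_eq_card_filter {T : Set (ℕ × ℕ)} (hT : IsTile n x T) (j : ℕ)
    [DecidablePred (fun i => (i, j) ∈ T)] :
    {i : ℕ | (i, j) ∈ T}.ncard = #{i ∈ Icc 1 j | (i, j) ∈ T} := by
  rw [← Set.ncard_coe_finset]
  congr 1
  ext i
  simp only [Set.mem_ofPred_eq, coe_filter, mem_Icc]
  exact ⟨fun h => ⟨⟨(hT.idxP_of_mem h).1, (hT.idxP_of_mem h).2.1⟩, h⟩, And.right⟩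

end Tiles

section Diagonals

variable {n : ℕ} {x : ℕ → ℕ → ℝ}

lemma IsGTPattern.diag_le (hx : IsGTPattern n x) (m : ℕ) {i j : ℕ} (hi : 1 ≤ i) (hij : i ≤ j)
    (hjn : j + m ≤ n) : x (i + m) (j + m) ≤ x i j := by
  induction m with
  | zero => rfl
  | succ m ih =>
    calc x (i + (m + 1)) (j + (m + 1)) ≤ x (i + m) (j + m) :=
          (hx.2 (i + m) (j + m) (by omega) (by omega) (by omega)).2
      _ ≤ x i j := ih (by omega)

lemma IsGTPattern.sameTile_of_diag_eq (hx : IsGTPattern n x) (m : ℕ) {i j : ℕ} (hi : 1 ≤ i)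
    (hij : i ≤ j) (hjn : j + m ≤ n) (heq : x i j = x (i + m) (j + m)) :
    SameTile n x (i, j) (i + m, j + m) := by
  induction m with
  | zero => exact Relation.ReflTransGen.refl
  | succ m ih =>
    -- equality at the ends of the antitone diagonal forces equality at every step
    have hmid : x i j = x (i + m) (j + m) :=
      le_antisymm (heq.trans_le (hx.2 (i + m) (j + m) (by omega) (by omega) (by omega)).2)
        (hx.diag_le m hi hij (by omega))
    refine (ih (by omega) hmid).tail
      ⟨⟨by omega, by omega, by omega⟩, ⟨by omega, by omega, hjn⟩, Or.inl ⟨rfl, rfl⟩, ?_⟩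
    exact hmid.symm.trans heq

end Diagonals

lemma add_le_add_of_abs_le_half_abs_sub {a b u v : ℝ} (hab : a ≤ b) (hu : |u| ≤ |a - b| / 2)
    (hv : |v| ≤ |b - a| / 2) : a + u ≤ b + v := by
  rw [abs_sub_comm, abs_of_nonneg (sub_nonneg.mpr hab)] at hu
  rw [abs_of_nonneg (sub_nonneg.mpr hab)] at hv
  linarith [abs_le.mp hu, abs_le.mp hv]

section TileConstant

variable {n : ℕ} {x y : ℕ → ℕ → ℝ}

lemma add_le_add_of_adj
    (hstep : ∀ p q, Step n x p q → y p.1 p.2 = y q.1 q.2)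
    (hgap : ∀ p q : ℕ × ℕ, IdxP n p.1 p.2 → IdxP n q.1 q.2 → x p.1 p.2 ≠ x q.1 q.2 →
      |y p.1 p.2| ≤ |x p.1 p.2 - x q.1 q.2| / 2)
    {p q : ℕ × ℕ} (hp : IdxP n p.1 p.2) (hq : IdxP n q.1 q.2) (hadj : Adj p q)
    (hle : x q.1 q.2 ≤ x p.1 p.2) : x q.1 q.2 + y q.1 q.2 ≤ x p.1 p.2 + y p.1 p.2 := by
  rcases hle.lt_or_eq with hlt | heq
  · exact add_le_add_of_abs_le_half_abs_sub hle (hgap q p hq hp hlt.ne) (hgap p q hp hq hlt.ne')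
  · rw [heq, hstep p q ⟨hp, hq, hadj, heq.symm⟩]

lemma IsGTPattern.add_nonneg_of_tile_const (hx : IsGTPattern n x)
    (hstep : ∀ p q, Step n x p q → y p.1 p.2 = y q.1 q.2)
    (hgap : ∀ p q : ℕ × ℕ, IdxP n p.1 p.2 → IdxP n q.1 q.2 → x p.1 p.2 ≠ x q.1 q.2 →
      |y p.1 p.2| ≤ |x p.1 p.2 - x q.1 q.2| / 2)
    (htop : ∀ i, y i n = 0) {i j : ℕ} (hp : IdxP n i j) : 0 ≤ x i j + y i j := by
  obtain ⟨hi, hij, hjn⟩ := hp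
  -- compare with the top-row entry `(i + m, n)` at the end of the diagonal through `(i, j)`
  set m := n - j
  have hend : IdxP n (i + m) (j + m) := ⟨by omega, by omega, by omega⟩
  have hend_nonneg := hx.1 _ _ hend
  have hy_end : y (i + m) (j + m) = 0 := by rw [show j + m = n by omega]; exact htop _
  rcases (hx.diag_le m hi hij (by omega)).lt_or_eq with hlt | heq
  · have hy := hgap (i, j) (i + m, j + m) ⟨hi, hij, hjn⟩ hend hlt.ne'
    rw [abs_of_pos (sub_pos.mpr hlt)] at hy
    linarith [neg_abs_le (y i j)]
  · have hy : y i j = y (i + m) (j + m) :=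
      SameTile.apply_eq hstep (hx.sameTile_of_diag_eq m hi hij (by omega) heq.symm)
    linarith

theorem GTMem.add_of_tile_const {lam mu : ℕ → ℤ} (hx : GTMem n lam mu x)
    (hstep : ∀ p q, Step n x p q → y p.1 p.2 = y q.1 q.2)
    (hgap : ∀ p q : ℕ × ℕ, IdxP n p.1 p.2 → IdxP n q.1 q.2 → x p.1 p.2 ≠ x q.1 q.2 →
      |y p.1 p.2| ≤ |x p.1 p.2 - x q.1 q.2| / 2)
    (hout : ∀ i j, ¬ IdxP n i j → y i j = 0) (htop : ∀ i, y i n = 0)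
    (hrow : ∀ j, 1 ≤ j → j ≤ n → ∑ i ∈ Icc 1 j, y i j = 0) :
    GTMem n lam mu (fun i j => x i j + y i j) := by
  obtain ⟨hpat, hxout, hxtop, hxrow⟩ := hx
  refine ⟨⟨fun i j hij => hpat.add_nonneg_of_tile_const hstep hgap htop hij,
    fun i j hi hij hjn => ⟨?_, ?_⟩⟩, fun i j hij => ?_, fun i hi hin => ?_, fun j hj hjn => ?_⟩
  · exact add_le_add_of_adj hstep hgap (p := (i, j + 1)) (q := (i, j)) ⟨hi, by omega, hjn⟩
      ⟨hi, hij, by omega⟩ (Or.inr (Or.inr (Or.inr ⟨rfl, rfl⟩))) (hpat.2 i j hi hij hjn).1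
  · exact add_le_add_of_adj hstep hgap (p := (i, j)) (q := (i + 1, j + 1))
      ⟨hi, hij, by omega⟩ ⟨by omega, by omega, hjn⟩ (Or.inl ⟨rfl, rfl⟩) (hpat.2 i j hi hij hjn).2
  · simp only [hxout i j hij, hout i j hij, add_zero]
  · simp only [htop, add_zero, hxtop i hi hin]
  · rw [sum_add_distrib, hrow j hj hjn, add_zero, hxrow j hj hjn]

end TileConstant

def IsTilePerturbation {s : ℕ} (P : Fin s → Set (ℕ × ℕ)) (ε : Fin s → ℝ) (y : ℕ → ℕ → ℝ) :
    Prop :=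
  (∀ k i j, (i, j) ∈ P k → y i j = ε k) ∧ ∀ i j, (∀ k, (i, j) ∉ P k) → y i j = 0

namespace IsTilePerturbation

variable {n s : ℕ} {x y : ℕ → ℕ → ℝ} {P : Fin s → Set (ℕ × ℕ)} {ε : Fin s → ℝ}

lemma neg (hy : IsTilePerturbation P ε y) : IsTilePerturbation P (-ε) (fun i j => -y i j) :=
  ⟨fun k i j h => by simp only [hy.1 k i j h, Pi.neg_apply],
    fun i j h => by simp only [hy.2 i j h, neg_zero]⟩

lemma eq_of_step (hy : IsTilePerturbation P ε y) (hP : ∀ k, IsTile n x (P k))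
    {p q : ℕ × ℕ} (hpq : Step n x p q) : y p.1 p.2 = y q.1 q.2 := by
  by_cases hp : ∃ k, p ∈ P k
  · obtain ⟨k, hk⟩ := hp
    rw [hy.1 k p.1 p.2 hk, hy.1 k q.1 q.2 ((hP k).mem_of_sameTile hk (.single hpq))]
  · push Not at hp
    rw [hy.2 p.1 p.2 hp,
      hy.2 q.1 q.2 fun k hq => hp k ((hP k).mem_of_sameTile hq (.single hpq.symm))]

lemma abs_le (hy : IsTilePerturbation P ε y)
    (hsmall : ∀ (k : Fin s) (p q : ℕ × ℕ), IdxP n p.1 p.2 → IdxP n q.1 q.2 →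
      x p.1 p.2 ≠ x q.1 q.2 → |ε k| < |x p.1 p.2 - x q.1 q.2| / 2)
    {p q : ℕ × ℕ} (hp : IdxP n p.1 p.2) (hq : IdxP n q.1 q.2) (hne : x p.1 p.2 ≠ x q.1 q.2) :
    |y p.1 p.2| ≤ |x p.1 p.2 - x q.1 q.2| / 2 := by
  by_cases hmem : ∃ k, p ∈ P k
  · obtain ⟨k, hk⟩ := hmem
    rw [hy.1 k p.1 p.2 hk]
    exact (hsmall k p q hp hq hne).le
  · push Not at hmem
    rw [hy.2 p.1 p.2 hmem, abs_zero]
    positivity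

open Classical in
lemma eq_sum_ite (hy : IsTilePerturbation P ε y) (hP : ∀ k, IsTile n x (P k))
    (hPinj : Function.Injective P) (i j : ℕ) :
    y i j = ∑ k, if (i, j) ∈ P k then ε k else 0 := by
  by_cases hmem : ∃ k, (i, j) ∈ P k
  · obtain ⟨k₀, hk₀⟩ := hmem
    rw [hy.1 k₀ i j hk₀, sum_eq_single_of_mem k₀ (mem_univ _), if_pos hk₀]
    intro k _ hk
    exact if_neg fun hmem => hk (hPinj ((hP k).eq_of_mem (hP k₀) hmem hk₀))
  · push Not at hmem
    rw [hy.2 i j hmem]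
    exact (sum_eq_zero fun k _ => if_neg (hmem k)).symm

lemma sum_row_eq_tileMat_mulVec (hy : IsTilePerturbation P ε y) (hP : ∀ k, IsTile n x (P k))
    (hPinj : Function.Injective P) (j : Fin (n - 2)) :
    ∑ i ∈ Icc 1 (j.1 + 2), y i (j.1 + 2) = (tileMat n s P).mulVec ε j := by
  classical
  calc ∑ i ∈ Icc 1 (j.1 + 2), y i (j.1 + 2)
      = ∑ k, ∑ i ∈ Icc 1 (j.1 + 2), if (i, j.1 + 2) ∈ P k then ε k else 0 := by
        rw [sum_comm]
        exact sum_congr rfl fun i _ => hy.eq_sum_ite hP hPinj i _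
    _ = (tileMat n s P).mulVec ε j := by
        refine sum_congr rfl fun k _ => ?_
        rw [← sum_filter, sum_const, nsmul_eq_mul]
        simp only [tileMat, (hP k).ncard_row_eq_card_filter]

end IsTilePerturbation

theorem GTMem.add_of_isTilePerturbation {n s : ℕ} {lam mu : ℕ → ℤ} {x y : ℕ → ℕ → ℝ}
    {P : Fin s → Set (ℕ × ℕ)} {ε : Fin s → ℝ} (hx : GTMem n lam mu x)
    (hPfree : ∀ k, IsFreeTile n x (P k)) (hPinj : Function.Injective P)
    (hε : (tileMat n s P).mulVec ε = 0)
    (hsmall : ∀ (k : Fin s) (p q : ℕ × ℕ), IdxP n p.1 p.2 → IdxP n q.1 q.2 →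
      x p.1 p.2 ≠ x q.1 q.2 → |ε k| < |x p.1 p.2 - x q.1 q.2| / 2)
    (hy : IsTilePerturbation P ε y) : GTMem n lam mu (fun i j => x i j + y i j) := by
  have hP k : IsTile n x (P k) := (hPfree k).1
  have htop i : y i n = 0 := hy.2 i n fun k => (hPfree k).2.2 i
  refine hx.add_of_tile_const (fun p q => hy.eq_of_step hP) (fun p q => hy.abs_le hsmall)
    (fun i j hij => hy.2 i j fun k hk => hij ((hP k).idxP_of_mem hk)) htop fun j hj hjn => ?_
  -- rows `2, …, n-1` are the rows of the tiling matrix; rows `1` and `n` meet no free tile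
  obtain rfl | hj1 := eq_or_lt_of_le hj
  · simpa using hy.2 1 1 fun k => (hPfree k).2.1
  obtain rfl | hjn := eq_or_lt_of_le hjn
  · exact sum_eq_zero fun i _ => htop i
  obtain ⟨j, rfl⟩ : ∃ j', j = j' + 2 := ⟨j - 2, by omega⟩
  exact (hy.sum_row_eq_tileMat_mulVec hP hPinj ⟨j, by omega⟩).trans (congrFun hε _)

theorem stmt6_general (n s : ℕ) (lam mu : ℕ → ℤ) (x : ℕ → ℕ → ℝ)
    (hx : GTMem n lam mu x)
    (P : Fin s → Set (ℕ × ℕ))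
    (hPfree : ∀ k, IsFreeTile n x (P k)) (hPinj : Function.Injective P)
    (ε : Fin s → ℝ) (hε : (tileMat n s P).mulVec ε = 0)
    (hsmall : ∀ (k : Fin s) (p q : ℕ × ℕ), IdxP n p.1 p.2 → IdxP n q.1 q.2 →
      x p.1 p.2 ≠ x q.1 q.2 → |ε k| < |x p.1 p.2 - x q.1 q.2| / 2)
    (y : ℕ → ℕ → ℝ)
    (hy : ∀ (k : Fin s) (i j : ℕ), (i, j) ∈ P k → y i j = ε k)
    (hy0 : ∀ i j : ℕ, (∀ k, (i, j) ∉ P k) → y i j = 0) :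
    GTMem n lam mu (fun i j => x i j + y i j) ∧
    GTMem n lam mu (fun i j => x i j - y i j) := by
  have hyP : IsTilePerturbation P ε y := ⟨hy, hy0⟩
  refine ⟨hx.add_of_isTilePerturbation hPfree hPinj hε hsmall hyP, ?_⟩
  simpa only [sub_eq_add_neg] using hx.add_of_isTilePerturbation hPfree hPinj
    (by rw [Matrix.mulVec_neg, hε, neg_zero])
    (fun k => by simpa only [Pi.neg_apply, abs_neg] using hsmall k) hyP.neg

/-- Perturbing the free tiles of a GT-pattern `x ∈ GT(λ,μ)` by a sufficiently small vector in
the kernel of the tiling matrix yields patterns `x + y` and `x - y` still in `GT(λ,μ)`. -/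
theorem stmt6 (n s : ℕ) (lam mu : ℕ → ℤ) (x : ℕ → ℕ → ℝ)
    (hx : GTMem n lam mu x)
    (P : Fin s → Set (ℕ × ℕ))
    (hPfree : ∀ k, IsFreeTile n x (P k)) (hPinj : Function.Injective P)
    (hPall : ∀ T, IsFreeTile n x T → ∃ k, P k = T)
    (ε : Fin s → ℝ) (hε : (tileMat n s P).mulVec ε = 0)
    (hsmall : ∀ (k : Fin s) (p q : ℕ × ℕ), IdxP n p.1 p.2 → IdxP n q.1 q.2 →
      x p.1 p.2 ≠ x q.1 q.2 → |ε k| < |x p.1 p.2 - x q.1 q.2| / 2)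
    (y : ℕ → ℕ → ℝ)
    (hy : ∀ (k : Fin s) (i j : ℕ), (i, j) ∈ P k → y i j = ε k)
    (hy0 : ∀ i j : ℕ, (∀ k, (i, j) ∉ P k) → y i j = 0) :
    GTMem n lam mu (fun i j => x i j + y i j) ∧
    GTMem n lam mu (fun i j => x i j - y i j) :=
  stmt6_general n s lam mu x hx P hPfree hPinj ε hε hsmall y hy hy0
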